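/- arXiv:2112.09971 — 3 statements merged into one kernel-verified Lean document; each statement's English description precedes it below -/
import Mathlib

section
/- Let (a_i) and (a'_i), i=1..n, be sequences of non-negative integers with equal sums, and suppose there exists a threshold t such that for every i with a_i < a'_i we have a'_i ≤ t, and for every i with a_i > a'_i we have a'_i ≥ t. Then either a_i = a'_i for all i, or the sum of a_i(a_i-1) over i is strictly greater than the sum of a'_i(a'_i-1) over i. -/
theorem stmt_2 (n : ℕ) (a a' : Fin n → ℕ)
    (hsum : ∑ i, a i = ∑ i, a' i)
    (ht : ∃ t : ℕ, (∀ i, a i < a' i → a' i ≤ t) ∧ (∀ i, a' i < a i → t ≤ a' i)) :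
    (∀ i, a i = a' i) ∨ ∑ i, a i * (a i - 1) > ∑ i, a' i * (a' i - 1) := by
  obtain ⟨t, h1, h2⟩ := ht
  by_cases hall : ∀ i, a i = a' i
  · exact Or.inl hall
  right
  push_neg at hall
  have hex : ∃ i, a i < a' i := by
    by_contra hc
    push_neg at hc
    obtain ⟨j, hj⟩ := hall
    have hlt : a' j < a j := lt_of_le_of_ne (hc j) (Ne.symm hj)
    have : ∑ i, a' i < ∑ i, a i :=
      Finset.sum_lt_sum (fun i _ => hc i) ⟨j, Finset.mem_univ j, hlt⟩
    omega
  obtain ⟨i0, hi0⟩ := hex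
  have key : ∑ i, ((2 * (t : ℤ) + 1) * ((a i : ℤ) - a' i)) <
      ∑ i, ((a i : ℤ) * a i - (a' i : ℤ) * a' i) := by
    apply Finset.sum_lt_sum
    · intro i _
      rcases lt_trichotomy (a i) (a' i) with h | h | h
      · have ha := h1 i h
        have h' : (a i : ℤ) < a' i := by exact_mod_cast h
        have ha' : (a' i : ℤ) ≤ t := by exact_mod_cast ha
        nlinarith
      · simp [h]
      · have ha := h2 i h
        have h' : (a' i : ℤ) < a i := by exact_mod_cast h
        have ha' : (t : ℤ) ≤ a' i := by exact_mod_cast ha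
        nlinarith
    · refine ⟨i0, Finset.mem_univ _, ?_⟩
      have ha := h1 i0 hi0
      have h' : (a i0 : ℤ) < a' i0 := by exact_mod_cast hi0
      have ha' : (a' i0 : ℤ) ≤ t := by exact_mod_cast ha
      nlinarith
  have hsz : ∑ i, ((a i : ℤ) - a' i) = 0 := by
    rw [Finset.sum_sub_distrib]
    have : (∑ i, (a i : ℤ)) = ∑ i, (a' i : ℤ) := by exact_mod_cast hsum
    rw [this]; ring
  have hz : ∑ i, ((2 * (t : ℤ) + 1) * ((a i : ℤ) - a' i)) = 0 := by
    rw [← Finset.mul_sum, hsz, mul_zero]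
  have hsq : ∑ i, ((a' i : ℤ) * a' i) < ∑ i, ((a i : ℤ) * a i) := by
    rw [hz] at key
    rw [Finset.sum_sub_distrib] at key
    linarith
  have hcast : ∀ b : ℕ, ((b * (b - 1) : ℕ) : ℤ) = (b : ℤ) * b - b := by
    intro b
    cases b with
    | zero => simp
    | succ k => push_cast [Nat.succ_sub_one]; ring
  rw [gt_iff_lt, ← Nat.cast_lt (α := ℤ), Nat.cast_sum, Nat.cast_sum]
  simp only [hcast]
  rw [Finset.sum_sub_distrib, Finset.sum_sub_distrib]
  have : (∑ i, (a i : ℤ)) = ∑ i, (a' i : ℤ) := by exact_mod_cast hsum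
  rw [this]
  linarith
end

section
/- Suppose a binary string y is obtained from a binary string x (ending in 0011) by one adjacent transposition, and segment both strings at occurrences of the marker 0011. Then ℓ_y − ℓ_x ∈ {−2, −1, 0, 1, 2}; moreover if ℓ_y = ℓ_x − 2 then two consecutive existing markers are destroyed and none created, and if ℓ_y = ℓ_x + 2 then two consecutive new markers are created and none destroyed. -/
/-!
Swapping `01 ↦ 10` at positions `n, n + 1` only affects marker occurrences whose window
`[j, j + 3]` meets `{n, n + 1}`. Since a marker has its zeros at offsets `0, 1` and its ones at
offsets `2, 3`, the only occurrence of `0011` that can be destroyed is the one at `n - 1` (reading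
the `01` in its middle), and the only ones that can be created are those at `n - 3` (ending in the
new `1`) and at `n + 1` (starting with the new `0`). Hence the count drops by at most one and grows
by at most two, and growing by two forces both creations and no destruction.
-/

/-- The marker `0011`. -/
def marker : List Bool := [false, false, true, true]

/-- There is an occurrence of the marker `0011` at position `i` of `x`. -/
def occAt (x : List Bool) (i : ℕ) : Prop :=
  i + 4 ≤ x.length ∧ (x.drop i).take 4 = marker

/-- Number of occurrences of the marker `0011` in `x`; for a string ending in the
marker this equals the number `ℓ_x` of segments of the marker segmentation. -/
def occCount (x : List Bool) : ℕ :=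
  ((Finset.range x.length).filter (fun i => (x.drop i).take 4 = marker)).card

def occSet (z : List Bool) : Finset ℕ :=
  (Finset.range z.length).filter (fun i => (z.drop i).take 4 = marker)

lemma occCount_eq_card_occSet (z : List Bool) : occCount z = (occSet z).card := rfl

lemma take_four_eq_marker_iff (w : List Bool) : w.take 4 = marker ↔
    w[0]? = some false ∧ w[1]? = some false ∧ w[2]? = some true ∧ w[3]? = some true := by
  rcases w with _ | ⟨a, _ | ⟨b, _ | ⟨c, _ | ⟨d, w⟩⟩⟩⟩ <;> simp [marker]

lemma occAt_iff_getElem? (z : List Bool) (i : ℕ) : occAt z i ↔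
    z[i]? = some false ∧ z[i + 1]? = some false ∧ z[i + 2]? = some true ∧
      z[i + 3]? = some true := by
  simp only [occAt, take_four_eq_marker_iff, List.getElem?_drop, Nat.add_zero]
  refine ⟨And.right, fun h => ⟨?_, h⟩⟩
  obtain ⟨hlt, -⟩ := List.getElem?_eq_some_iff.mp h.2.2.2
  omega

lemma mem_occSet (z : List Bool) (i : ℕ) : i ∈ occSet z ↔ occAt z i := by
  simp only [occSet, Finset.mem_filter, Finset.mem_range, occAt]
  refine ⟨fun ⟨_, h⟩ => ⟨?_, h⟩, fun ⟨h, h'⟩ => ⟨by omega, h'⟩⟩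
  have := congrArg List.length h
  simp only [List.length_take, List.length_drop, marker, List.length_cons,
    List.length_nil] at this
  omega

lemma le_add_one_of_occAt_of_getElem?_eq_false {z : List Bool} {j k : ℕ} (h : occAt z j)
    (hjk : j ≤ k) (hkj : k ≤ j + 3) (hk : z[k]? = some false) : k ≤ j + 1 := by
  obtain ⟨d, rfl⟩ := Nat.exists_eq_add_of_le hjk
  have hd : d ≤ 3 := by omega
  rw [occAt_iff_getElem?] at h
  interval_cases d <;> simp_all

lemma add_two_le_of_occAt_of_getElem?_eq_true {z : List Bool} {j k : ℕ} (h : occAt z j)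
    (hjk : j ≤ k) (hkj : k ≤ j + 3) (hk : z[k]? = some true) : j + 2 ≤ k := by
  obtain ⟨d, rfl⟩ := Nat.exists_eq_add_of_le hjk
  have hd : d ≤ 3 := by omega
  rw [occAt_iff_getElem?] at h
  interval_cases d <;> simp_all

lemma card_add_card_sdiff_eq {α : Type*} [DecidableEq α] (s t : Finset α) :
    t.card + (s \ t).card = s.card + (t \ s).card := by
  rw [add_comm, Finset.card_sdiff_add_card, Finset.union_comm, ← Finset.card_sdiff_add_card,
    add_comm]

section Swap

variable (u v : List Bool)

lemma getElem?_append_cons_cons (a b : Bool) :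
    (u ++ a :: b :: v)[u.length]? = some a ∧ (u ++ a :: b :: v)[u.length + 1]? = some b := by
  simp

lemma getElem?_append_swap_of_ne (a b : Bool) {j : ℕ} (h₀ : j ≠ u.length)
    (h₁ : j ≠ u.length + 1) : (u ++ a :: b :: v)[j]? = (u ++ b :: a :: v)[j]? := by
  rcases lt_or_ge j u.length with h | h
  · rw [List.getElem?_append_left h, List.getElem?_append_left h]
  · obtain ⟨d, rfl⟩ : ∃ d, j = u.length + (d + 2) := ⟨j - u.length - 2, by omega⟩
    simp [List.getElem?_append_right]

lemma occAt_append_swap_iff_of_far (a b : Bool) {j : ℕ}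
    (hj : j + 3 < u.length ∨ u.length + 2 ≤ j) :
    occAt (u ++ a :: b :: v) j ↔ occAt (u ++ b :: a :: v) j := by
  simp only [occAt_iff_getElem?]
  rw [getElem?_append_swap_of_ne u v a b (j := j) (by omega) (by omega),
    getElem?_append_swap_of_ne u v a b (j := j + 1) (by omega) (by omega),
    getElem?_append_swap_of_ne u v a b (j := j + 2) (by omega) (by omega),
    getElem?_append_swap_of_ne u v a b (j := j + 3) (by omega) (by omega)]

lemma near_of_occAt_of_not_occAt (a b : Bool) {j : ℕ} (hx : occAt (u ++ a :: b :: v) j)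
    (hy : ¬ occAt (u ++ b :: a :: v) j) : u.length ≤ j + 3 ∧ j ≤ u.length + 1 := by
  by_contra hfar
  exact hy ((occAt_append_swap_iff_of_far u v a b (by omega)).mp hx)

lemma occSet_sdiff_subset_of_swap_zero_one :
    occSet (u ++ false :: true :: v) \ occSet (u ++ true :: false :: v) ⊆ {u.length - 1} := by
  intro j hj
  rw [Finset.mem_sdiff, mem_occSet, mem_occSet] at hj
  obtain ⟨hx, hy⟩ := hj
  obtain ⟨hzero, hone⟩ := getElem?_append_cons_cons u v false true
  have hnear := near_of_occAt_of_not_occAt u v false true hx hy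
  have := fun h₁ h₂ => le_add_one_of_occAt_of_getElem?_eq_false hx h₁ h₂ hzero
  have := fun h₁ h₂ => add_two_le_of_occAt_of_getElem?_eq_true hx h₁ h₂ hone
  rw [Finset.mem_singleton]
  omega

lemma add_three_eq_or_eq_of_swap_one_zero {j : ℕ} (hy : occAt (u ++ true :: false :: v) j)
    (hx : ¬ occAt (u ++ false :: true :: v) j) : j + 3 = u.length ∨ j = u.length + 1 := by
  obtain ⟨hone, hzero⟩ := getElem?_append_cons_cons u v true false
  have hnear := near_of_occAt_of_not_occAt u v true false hy hx
  have := fun h₁ h₂ => le_add_one_of_occAt_of_getElem?_eq_false hy h₁ h₂ hzero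
  have := fun h₁ h₂ => add_two_le_of_occAt_of_getElem?_eq_true hy h₁ h₂ hone
  omega

lemma occSet_sdiff_subset_of_swap_one_zero :
    occSet (u ++ true :: false :: v) \ occSet (u ++ false :: true :: v) ⊆
      {u.length - 3, u.length + 1} := by
  intro j hj
  rw [Finset.mem_sdiff, mem_occSet, mem_occSet] at hj
  have := add_three_eq_or_eq_of_swap_one_zero u v hj.1 hj.2
  rw [Finset.mem_insert, Finset.mem_singleton]
  omega

lemma card_occSet_sdiff_le_one_of_swap_zero_one :
    (occSet (u ++ false :: true :: v) \ occSet (u ++ true :: false :: v)).card ≤ 1 :=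
  (Finset.card_le_card (occSet_sdiff_subset_of_swap_zero_one u v)).trans
    (Finset.card_singleton _).le

lemma card_occSet_sdiff_le_two_of_swap_one_zero :
    (occSet (u ++ true :: false :: v) \ occSet (u ++ false :: true :: v)).card ≤ 2 :=
  (Finset.card_le_card (occSet_sdiff_subset_of_swap_one_zero u v)).trans
    Finset.card_le_two

lemma occCount_add_card_sdiff_of_swap (a b : Bool) :
    occCount (u ++ b :: a :: v) + (occSet (u ++ a :: b :: v) \ occSet (u ++ b :: a :: v)).card =
      occCount (u ++ a :: b :: v) +
        (occSet (u ++ b :: a :: v) \ occSet (u ++ a :: b :: v)).card := by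
  rw [occCount_eq_card_occSet, occCount_eq_card_occSet]
  exact card_add_card_sdiff_eq _ _

lemma occCount_le_add_one_of_swap_zero_one :
    occCount (u ++ false :: true :: v) ≤ occCount (u ++ true :: false :: v) + 1 := by
  have := occCount_add_card_sdiff_of_swap u v false true
  have := card_occSet_sdiff_le_one_of_swap_zero_one u v
  omega

lemma occCount_le_add_two_of_swap_one_zero :
    occCount (u ++ true :: false :: v) ≤ occCount (u ++ false :: true :: v) + 2 := by
  have := occCount_add_card_sdiff_of_swap u v false true
  have := card_occSet_sdiff_le_two_of_swap_one_zero u v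
  omega

lemma markers_created_of_occCount_eq_add_two
    (h : occCount (u ++ true :: false :: v) = occCount (u ++ false :: true :: v) + 2) :
    (∃ i, occAt (u ++ true :: false :: v) i ∧ ¬ occAt (u ++ false :: true :: v) i ∧
        occAt (u ++ true :: false :: v) (i + 4) ∧ ¬ occAt (u ++ false :: true :: v) (i + 4)) ∧
      ∀ j, occAt (u ++ false :: true :: v) j → occAt (u ++ true :: false :: v) j := by
  have hcount := occCount_add_card_sdiff_of_swap u v false true
  have hcreated_le := card_occSet_sdiff_le_two_of_swap_one_zero u v
  set x := u ++ false :: true :: v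
  set y := u ++ true :: false :: v
  have hnone : (occSet x \ occSet y).card = 0 := by omega
  have hcreated : occSet y \ occSet x = {u.length - 3, u.length + 1} :=
    Finset.eq_of_subset_of_card_le (occSet_sdiff_subset_of_swap_one_zero u v)
      (Finset.card_le_two.trans (by omega))
  have hsub : occSet x ⊆ occSet y :=
    Finset.sdiff_eq_empty_iff_subset.mp (Finset.card_eq_zero.mp hnone)
  have hmem : ∀ j ∈ ({u.length - 3, u.length + 1} : Finset ℕ),
      occAt y j ∧ ¬ occAt x j := by
    intro j hj
    rw [← hcreated, Finset.mem_sdiff, mem_occSet, mem_occSet] at hj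
    exact hj
  obtain ⟨hy₀, hx₀⟩ := hmem _ (Finset.mem_insert_self _ _)
  obtain ⟨hy₁, hx₁⟩ := hmem _ (Finset.mem_insert_of_mem (Finset.mem_singleton_self _))
  have hpos := add_three_eq_or_eq_of_swap_one_zero u v hy₀ hx₀
  have hshift : u.length - 3 + 4 = u.length + 1 := by omega
  refine ⟨⟨u.length - 3, hy₀, hx₀, hshift ▸ hy₁, hshift ▸ hx₁⟩, fun j hj => ?_⟩
  rw [← mem_occSet] at hj ⊢
  exact hsub hj

end Swap

theorem stmt_11_general (x y : List Bool)
    (htrans : ∃ (u v : List Bool) (a b : Bool), x = u ++ a :: b :: v ∧ y = u ++ b :: a :: v) :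
    (occCount y + 2 = occCount x ∨ occCount y + 1 = occCount x ∨
      occCount y = occCount x ∨ occCount y = occCount x + 1 ∨
      occCount y = occCount x + 2) ∧
    (occCount y + 2 = occCount x →
      (∃ i, occAt x i ∧ ¬ occAt y i ∧ occAt x (i + 4) ∧ ¬ occAt y (i + 4)) ∧
      ∀ j, occAt y j → occAt x j) ∧
    (occCount y = occCount x + 2 →
      (∃ i, occAt y i ∧ ¬ occAt x i ∧ occAt y (i + 4) ∧ ¬ occAt x (i + 4)) ∧
      ∀ j, occAt x j → occAt y j) := by
  obtain ⟨u, v, a, b, rfl, rfl⟩ := htrans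
  have hdrop := occCount_le_add_one_of_swap_zero_one u v
  have hgrow := occCount_le_add_two_of_swap_one_zero u v
  have hcreate := markers_created_of_occCount_eq_add_two u v
  cases a <;> cases b
  · exact ⟨by omega, by omega, by omega⟩
  · exact ⟨by omega, by omega, hcreate⟩
  · exact ⟨by omega, fun h => hcreate h.symm, by omega⟩
  · exact ⟨by omega, by omega, by omega⟩

/-- If `y` is obtained from `x` (ending in `0011`) by one adjacent transposition,
then `ℓ_y - ℓ_x ∈ {-2,-1,0,1,2}`; moreover if `ℓ_y = ℓ_x - 2` then two
consecutive existing markers (at positions `i` and `i+4`) are destroyed and none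
created, and if `ℓ_y = ℓ_x + 2` then two consecutive new markers are created and
none destroyed. -/
theorem stmt_11 (x y : List Bool) (hx : marker <:+ x)
    (htrans : ∃ (u v : List Bool) (a b : Bool), x = u ++ a :: b :: v ∧ y = u ++ b :: a :: v) :
    (occCount y + 2 = occCount x ∨ occCount y + 1 = occCount x ∨
      occCount y = occCount x ∨ occCount y = occCount x + 1 ∨
      occCount y = occCount x + 2) ∧
    (occCount y + 2 = occCount x →
      (∃ i, occAt x i ∧ ¬ occAt y i ∧ occAt x (i + 4) ∧ ¬ occAt y (i + 4)) ∧
      ∀ j, occAt y j → occAt x j) ∧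
    (occCount y = occCount x + 2 →
      (∃ i, occAt y i ∧ ¬ occAt x i ∧ occAt y (i + 4) ∧ ¬ occAt x (i + 4)) ∧
      ∀ j, occAt x j → occAt y j) :=
  stmt_11_general x y htrans
end

section
/- Suppose x ∈ {0,1}^n is transformed into y by first deleting the bit at position d and then substituting (flipping) the bit at position e − δ of the resulting string, where δ = 1 if e > d and δ = 0 otherwise, and d ≠ e. Then f(x) − f(y) = d·x_d + Σ_{i=d}^{n−1} y_i + e·(2x_e − 1), where f(z) = Σ_i i·z_i (over the integers, before reduction modulo 3n+1). -/
/-! Deleting `x_d` lowers the weight of every later bit by one, so `f` drops by `d·x_d` plus the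
number of ones after position `d`; flipping a bit at position `p` changes `f` by `±p`. When the
flip happens after the deletion point (`e > d`), it sits at `p = e - 1` and also changes the count
of ones after `d`, which is why the count is taken in `y` and the flip then costs `e` in total. -/

def b2i (b : Bool) : ℤ := if b then 1 else 0

def vt (l : List Bool) : ℤ :=
  (l.zipIdx.map (fun p => ((p.2 : ℤ) + 1) * b2i p.1)).sum

lemma b2i_not (b : Bool) : b2i (!b) = 1 - b2i b := by
  cases b <;> simp [b2i]

lemma count_true_cons (b : Bool) (l : List Bool) :
    ((b :: l).count true : ℤ) = b2i b + l.count true := by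
  cases b <;> simp [b2i, add_comm]

lemma count_true_eraseIdx {l : List Bool} {i : ℕ} (h : i < l.length) :
    (l.count true : ℤ) = (l.eraseIdx i).count true + b2i (l.getD i false) := by
  induction l generalizing i with
  | nil => simp at h
  | cons b l ih =>
    cases i with
    | zero => simp only [List.eraseIdx_cons_zero, List.getD_cons_zero, count_true_cons]; ring
    | succ i =>
      simp only [List.eraseIdx_cons_succ, List.getD_cons_succ, count_true_cons,
        ih (Nat.lt_of_succ_lt_succ h)]
      ring

lemma count_true_set {l : List Bool} {i : ℕ} (b : Bool) (h : i < l.length) :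
    ((l.set i b).count true : ℤ) = l.count true + b2i b - b2i (l.getD i false) := by
  induction l generalizing i with
  | nil => simp at h
  | cons c l ih =>
    cases i with
    | zero => simp only [List.set_cons_zero, List.getD_cons_zero, count_true_cons]; ring
    | succ i =>
      simp only [List.set_cons_succ, List.getD_cons_succ, count_true_cons,
        ih (Nat.lt_of_succ_lt_succ h)]
      ring

lemma sum_zipIdx_eq_vt_add (l : List Bool) (k : ℕ) :
    ((l.zipIdx k).map fun p => ((p.2 : ℤ) + 1) * b2i p.1).sum = vt l + k * l.count true := by
  induction l generalizing k with
  | nil => simp [vt]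
  | cons b l ih =>
    simp only [vt, List.zipIdx_cons, List.map_cons, List.sum_cons] at ih ⊢
    rw [ih, ih 1, count_true_cons]
    push_cast
    ring

lemma vt_cons (b : Bool) (l : List Bool) : vt (b :: l) = b2i b + vt l + l.count true := by
  rw [vt, List.zipIdx_cons, List.map_cons, List.sum_cons, sum_zipIdx_eq_vt_add]
  push_cast
  ring

lemma vt_eraseIdx {l : List Bool} {i : ℕ} (h : i < l.length) :
    vt l = vt (l.eraseIdx i) + (i + 1) * b2i (l.getD i false) + (l.drop (i + 1)).count true := by
  induction l generalizing i with
  | nil => simp at h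
  | cons b l ih =>
    cases i with
    | zero =>
      simp only [List.eraseIdx_cons_zero, List.getD_cons_zero, List.drop_succ_cons,
        List.drop_zero, vt_cons]
      push_cast
      ring
    | succ i =>
      have h' := Nat.lt_of_succ_lt_succ h
      simp only [List.eraseIdx_cons_succ, List.getD_cons_succ, List.drop_succ_cons, vt_cons,
        ih h', count_true_eraseIdx h']
      push_cast
      ring

lemma vt_set {l : List Bool} {i : ℕ} (b : Bool) (h : i < l.length) :
    vt (l.set i b) = vt l + (i + 1) * (b2i b - b2i (l.getD i false)) := by
  induction l generalizing i with
  | nil => simp at h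
  | cons c l ih =>
    cases i with
    | zero => simp only [List.set_cons_zero, List.getD_cons_zero, vt_cons]; ring
    | succ i =>
      have h' := Nat.lt_of_succ_lt_succ h
      simp only [List.set_cons_succ, List.getD_cons_succ, vt_cons, ih h', count_true_set b h']
      push_cast
      ring

lemma List.drop_eraseIdx_self {α : Type*} (l : List α) (i : ℕ) :
    (l.eraseIdx i).drop i = l.drop (i + 1) := by
  induction l generalizing i with
  | nil => simp
  | cons b l ih =>
    cases i with
    | zero => simp
    | succ i => simpa using ih i

lemma List.getD_eraseIdx_of_lt {α : Type*} {l : List α} {i j : ℕ} (a : α) (h : j < i) :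
    (l.eraseIdx i).getD j a = l.getD j a := by
  simp [List.getD_eq_getElem?_getD, List.getElem?_eraseIdx_of_lt h]

lemma List.getD_eraseIdx_of_ge {α : Type*} {l : List α} {i j : ℕ} (a : α) (h : i ≤ j) :
    (l.eraseIdx i).getD j a = l.getD (j + 1) a := by
  simp [List.getD_eq_getElem?_getD, List.getElem?_eraseIdx_of_ge h]

lemma vt_sub_vt_eraseIdx_set_of_lt {x : List Bool} {a c : ℕ} (hac : a ≤ c)
    (hc : c + 1 < x.length) :
    vt x - vt ((x.eraseIdx a).set c (!x.getD (c + 1) false)) =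
      (a + 1) * b2i (x.getD a false) +
        (((x.eraseIdx a).set c (!x.getD (c + 1) false)).drop a).count true +
        (c + 2) * (2 * b2i (x.getD (c + 1) false) - 1) := by
  have hc' : c < (x.eraseIdx a).length := by rw [List.length_eraseIdx_of_lt (by omega)]; omega
  have hdrop : ((x.eraseIdx a).set c (!x.getD (c + 1) false)).drop a =
      (x.drop (a + 1)).set (c - a) (!x.getD (c + 1) false) := by
    rw [List.drop_set, if_neg (by omega), List.drop_eraseIdx_self]
  have hget : (x.drop (a + 1)).getD (c - a) false = x.getD (c + 1) false := by
    rw [List.getD_eq_getElem?_getD, List.getElem?_drop, List.getD_eq_getElem?_getD,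
      show a + 1 + (c - a) = c + 1 by omega]
  rw [vt_eraseIdx (show a < x.length by omega), vt_set _ hc', hdrop,
    count_true_set _ (by rw [List.length_drop]; omega), hget,
    List.getD_eraseIdx_of_ge _ hac, b2i_not]
  ring

lemma vt_sub_vt_eraseIdx_set_of_gt {x : List Bool} {a b : ℕ} (hba : b < a)
    (ha : a < x.length) :
    vt x - vt ((x.eraseIdx a).set b (!x.getD b false)) =
      (a + 1) * b2i (x.getD a false) +
        (((x.eraseIdx a).set b (!x.getD b false)).drop a).count true +
        (b + 1) * (2 * b2i (x.getD b false) - 1) := by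
  have hb : b < (x.eraseIdx a).length := by rw [List.length_eraseIdx_of_lt ha]; omega
  rw [vt_eraseIdx ha, vt_set _ hb, List.drop_set, if_pos hba, List.drop_eraseIdx_self,
    List.getD_eraseIdx_of_lt _ hba, b2i_not]
  ring

/-- If `y` is obtained from `x ∈ {0,1}^n` by deleting the bit at (1-based)
position `d` and then flipping the bit at position `e - δ` of the result, where
`δ = 1` iff `e > d`, then
`f(x) - f(y) = d·x_d + ∑_{i=d}^{n-1} y_i + e·(2·x_e - 1)` over the integers. -/
theorem stmt_14 (n : ℕ) (x : List Bool) (hx : x.length = n)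
    (d e : ℕ) (hd1 : 1 ≤ d) (hdn : d ≤ n) (he1 : 1 ≤ e) (hen : e ≤ n)
    (hde : d ≠ e)
    (x' : List Bool) (hx' : x' = x.eraseIdx (d - 1))
    (δ : ℕ) (hδ : δ = if d < e then 1 else 0)
    (y : List Bool) (hy : y = x'.set (e - δ - 1) (! x.getD (e - 1) false)) :
    vt x - vt y =
      (d : ℤ) * b2i (x.getD (d - 1) false) + ((y.drop (d - 1)).count true : ℤ) +
        (e : ℤ) * (2 * b2i (x.getD (e - 1) false) - 1) := by
  subst hx hx' hy
  obtain ⟨a, rfl⟩ : ∃ a, d = a + 1 := ⟨d - 1, by omega⟩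
  obtain ⟨b, rfl⟩ : ∃ b, e = b + 1 := ⟨e - 1, by omega⟩
  rcases Nat.lt_or_gt_of_ne hde with hlt | hgt
  · obtain ⟨c, rfl⟩ : ∃ c, b = c + 1 := ⟨b - 1, by omega⟩
    rw [if_pos hlt] at hδ
    rw [show c + 1 + 1 - δ - 1 = c by omega]
    push_cast
    simpa [add_assoc, one_add_one_eq_two] using
      vt_sub_vt_eraseIdx_set_of_lt (x := x) (by omega : a ≤ c) (by omega)
  · rw [if_neg (by omega)] at hδ
    rw [show b + 1 - δ - 1 = b by omega]
    push_cast
    simpa using vt_sub_vt_eraseIdx_set_of_gt (x := x) (by omega : b < a) (by omega)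
end
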